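/- For any recall strategies s1, s2 of a transition system T and any sets A, B ⊆ V, if Path_{s1∘_B s2}(A) ⊆ Visit(B), then (Path_{s1∘_B s2}(A))|_B ⊆ Path_{s2}(B). -/

import Mathlib

namespace Nav

noncomputable section

attribute [local instance] Classical.propDecidable

/-- A transition system over a set of views `V` (Definition 2 of the paper):
a set of states `S`, an indistinguishability equivalence relation `sim` on `S`,
a map `star` from views to equivalence classes of states, a nonempty set of
instructions `I`, and for each instruction a transition map into nonempty sets
of states. -/
structure TransitionSystem (V : Type) where
  S : Type
  sim : Setoid S
  star : V → Quotient sim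
  I : Type
  instNonempty : Nonempty I
  Δ : I → S → Set S
  Δ_nonempty : ∀ i w, (Δ i w).Nonempty

variable {V : Type}

namespace TransitionSystem

/-- The equivalence class `[w]` of a state. -/
def cls (T : TransitionSystem V) (w : T.S) : Quotient T.sim := Quotient.mk T.sim w

/-- `A* = { a* | a ∈ A }`. -/
def starSet (T : TransitionSystem V) (A : Set V) : Set (Quotient T.sim) := T.star '' A

/-- A history `w₀,i₁,w₁,…,iₙ,wₙ`: the states are `w 0, …, w n` and the
instruction `iₖ` (for `1 ≤ k ≤ n`) is `i (k-1)`.  (Values of `w` above `n` and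
of `i` above `n-1` are irrelevant junk.) -/
structure History (T : TransitionSystem V) where
  n : ℕ
  w : ℕ → T.S
  i : ℕ → T.I
  valid : ∀ k < n, w (k + 1) ∈ T.Δ (i k) (w k)

variable {T : TransitionSystem V}

/-- Indistinguishability `≈` of histories: same length, same instruction
sequence, and state-wise indistinguishable states. -/
def History.Indist (h h' : History T) : Prop :=
  h.n = h'.n ∧ (∀ k < h.n, h.i k = h'.i k) ∧ ∀ k ≤ h.n, T.sim.r (h.w k) (h'.w k)

/-- `hd(h)`: the last state of a history. -/
def History.hd (h : History T) : T.S := h.w h.n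

/-- A recall strategy: a function from histories to instructions that is
constant on `≈`-equivalence classes of histories (i.e. a function on
histories modulo `≈`). -/
structure RecallStrategy (T : TransitionSystem V) where
  act : History T → T.I
  respects : ∀ h h' : History T, h.Indist h' → act h = act h'

/-- An infinite sequence `w₀,i₁,w₁,i₂,w₂,…`: states `w 0, w 1, …` and
instructions `i 0, i 1, …` where `i k` is the instruction `i_{k+1}` used to go
from `w k` to `w (k+1)`. -/
structure Path (T : TransitionSystem V) where
  w : ℕ → T.S
  i : ℕ → T.I

/-- Every finite prefix of the sequence is a history. -/
def Path.Valid (π : Path T) : Prop := ∀ k, π.w (k + 1) ∈ T.Δ (π.i k) (π.w k)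

/-- The prefix history `w₀,i₁,…,wₙ` of a valid infinite sequence. -/
def Path.prefixH (π : Path T) (hv : π.Valid) (n : ℕ) : History T :=
  ⟨n, π.w, π.i, fun k _ => hv k⟩

/-- `π` is a path under the recall strategy `s` (Definition 7): every finite
prefix is a history and each instruction is the one prescribed by `s` on the
preceding prefix history. -/
def IsPathUnder (s : RecallStrategy T) (π : Path T) : Prop :=
  ∃ hv : π.Valid, ∀ k, π.i k = s.act (π.prefixH hv k)

/-- `Path_s(A)`: the paths under `s` whose initial class is in `A*`. -/
def PathSet (s : RecallStrategy T) (A : Set V) : Set (Path T) :=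
  {π | IsPathUnder s π ∧ T.cls (π.w 0) ∈ T.starSet A}

/-- `Visit_s(B)`: the paths under `s` that visit a class in `B*`. -/
def VisitSet (s : RecallStrategy T) (B : Set V) : Set (Path T) :=
  {π | IsPathUnder s π ∧ ∃ k, T.cls (π.w k) ∈ T.starSet B}

/-- The number of initial states dropped by the truncation `h|_B`
(Definition 12): the least `k` such that either `k = n` or `[wₖ] ∈ B*`. -/
def History.truncIdx (h : History T) (B : Set V) : ℕ :=
  Nat.find (p := fun k => k = h.n ∨ T.cls (h.w k) ∈ T.starSet B) ⟨h.n, Or.inl rfl⟩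

/-- The truncation `h|_B` of a history (Definition 12): repeatedly drop the
first state while the length is positive and the first class is not in `B*`. -/
def History.trunc (h : History T) (B : Set V) : History T where
  n := h.n - h.truncIdx B
  w := fun k => h.w (h.truncIdx B + k)
  i := fun k => h.i (h.truncIdx B + k)
  valid := fun k hk => h.valid (h.truncIdx B + k) (by omega)

/-- The composition `s₁ ∘_B s₂` of recall strategies (Definition 13): follow
`s₁` while no state of the history has its class in `B*`; once such a state is
reached, follow `s₂` on the truncated history. -/
def RecallStrategy.compB (s1 s2 : RecallStrategy T) (B : Set V) : RecallStrategy T where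
  act := fun h =>
    if ∀ k ≤ h.n, T.cls (h.w k) ∉ T.starSet B then s1.act h
    else s2.act (h.trunc B)
  respects := by
    intro h h' hi
    obtain ⟨hn, hins, hsim⟩ := hi
    have hcls : ∀ k ≤ h.n, T.cls (h.w k) = T.cls (h'.w k) := fun k hk => Quot.sound (hsim k hk)
    have hcond : (∀ k ≤ h.n, T.cls (h.w k) ∉ T.starSet B) ↔
        (∀ k ≤ h'.n, T.cls (h'.w k) ∉ T.starSet B) := by
      constructor
      · intro hc k hk
        rw [← hcls k (by omega)]
        exact hc k (by omega)
      · intro hc k hk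
        rw [hcls k hk]
        exact hc k (by omega)
    have d1 : h.truncIdx B ≤ h.n := Nat.find_le (Or.inl rfl)
    have d2 : h'.truncIdx B ≤ h'.n := Nat.find_le (Or.inl rfl)
    have p1 : h.truncIdx B = h.n ∨ T.cls (h.w (h.truncIdx B)) ∈ T.starSet B :=
      Nat.find_spec (p := fun k => k = h.n ∨ T.cls (h.w k) ∈ T.starSet B) ⟨h.n, Or.inl rfl⟩
    have p2 : h'.truncIdx B = h'.n ∨ T.cls (h'.w (h'.truncIdx B)) ∈ T.starSet B :=
      Nat.find_spec (p := fun k => k = h'.n ∨ T.cls (h'.w k) ∈ T.starSet B) ⟨h'.n, Or.inl rfl⟩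
    have hidx : h.truncIdx B = h'.truncIdx B := by
      have le1 : h'.truncIdx B ≤ h.truncIdx B := by
        apply Nat.find_le
        rcases p1 with e | hb
        · exact Or.inl (by omega)
        · exact Or.inr (by rw [← hcls _ d1]; exact hb)
      have le2 : h.truncIdx B ≤ h'.truncIdx B := by
        apply Nat.find_le
        rcases p2 with e | hb
        · exact Or.inl (by omega)
        · exact Or.inr (by rw [hcls _ (by omega)]; exact hb)
      omega
    show (if ∀ k ≤ h.n, T.cls (h.w k) ∉ T.starSet B then s1.act h else s2.act (h.trunc B)) =
        (if ∀ k ≤ h'.n, T.cls (h'.w k) ∉ T.starSet B then s1.act h' else s2.act (h'.trunc B))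
    by_cases hc : ∀ k ≤ h.n, T.cls (h.w k) ∉ T.starSet B
    · rw [if_pos hc, if_pos (hcond.mp hc)]
      exact s1.respects h h' ⟨hn, hins, hsim⟩
    · rw [if_neg hc, if_neg (fun hc' => hc (hcond.mpr hc'))]
      apply s2.respects
      refine ⟨?_, ?_, ?_⟩
      · show h.n - h.truncIdx B = h'.n - h'.truncIdx B
        omega
      · intro k hk
        have hk' : k < h.n - h.truncIdx B := hk
        show h.i (h.truncIdx B + k) = h'.i (h'.truncIdx B + k)
        rw [← hidx]
        exact hins _ (by omega)
      · intro k hk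
        have hk' : k ≤ h.n - h.truncIdx B := hk
        show T.sim.r (h.w (h.truncIdx B + k)) (h'.w (h'.truncIdx B + k))
        rw [← hidx]
        exact hsim _ (by omega)

/-- The truncation `π|_B` of a path (Definition 15): drop initial states until
the first one whose class is in `B*` (if no such state exists the truncation is
left undefined by the paper; we take it to be `π` itself). -/
def Path.trunc (π : Path T) (B : Set V) : Path T :=
  if H : ∃ k, T.cls (π.w k) ∈ T.starSet B then
    ⟨fun k => π.w (Nat.find H + k), fun k => π.i (Nat.find H + k)⟩
  else π

/-- `π` is a path under a memoryless strategy `s : S/∼ → I` (Definition 6). -/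
def IsPathUnderM (s : Quotient T.sim → T.I) (π : Path T) : Prop :=
  π.Valid ∧ ∀ k, π.i k = s (T.cls (π.w k))

/-- `Path_s(A)` for a memoryless strategy. -/
def PathSetM (s : Quotient T.sim → T.I) (A : Set V) : Set (Path T) :=
  {π | IsPathUnderM s π ∧ T.cls (π.w 0) ∈ T.starSet A}

/-- `Visit_s(B)` for a memoryless strategy. -/
def VisitSetM (s : Quotient T.sim → T.I) (B : Set V) : Set (Path T) :=
  {π | IsPathUnderM s π ∧ ∃ k, T.cls (π.w k) ∈ T.starSet B}

end TransitionSystem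

open TransitionSystem

/-- The language Φ: atomic formulae `A ▷ B` for nonempty `A, B ⊆ V`, closed
under negation and implication (Definition 1). -/
inductive Formula (V : Type) : Type
  | nav : (A B : Set V) → A.Nonempty → B.Nonempty → Formula V
  | neg : Formula V → Formula V
  | imp : Formula V → Formula V → Formula V

/-- Classical evaluation of a formula under a truth assignment to the atoms. -/
def Formula.evalWith (v : Set V → Set V → Prop) : Formula V → Prop
  | .nav A B _ _ => v A B
  | .neg φ => ¬ φ.evalWith v
  | .imp φ ψ => φ.evalWith v → ψ.evalWith v

/-- Propositional tautologies of the language Φ. -/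
def Formula.Tautology (φ : Formula V) : Prop := ∀ v, φ.evalWith v

/-- Derivability `X ⊢ φ` from propositional tautologies and Armstrong's axioms
(Reflexivity, Augmentation, Transitivity) using Modus Ponens, with the
formulae of `X` as additional axioms.  Plain `⊢ φ` is `ArmDeriv ∅ φ`. -/
inductive ArmDeriv (X : Set (Formula V)) : Formula V → Prop
  | hyp {φ : Formula V} : φ ∈ X → ArmDeriv X φ
  | taut {φ : Formula V} : φ.Tautology → ArmDeriv X φ
  | refl {A B : Set V} (hA : A.Nonempty) (hB : B.Nonempty) :
      A ⊆ B → ArmDeriv X (.nav A B hA hB)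
  | aug {A B C : Set V} (hA : A.Nonempty) (hB : B.Nonempty) (hC : C.Nonempty) :
      ArmDeriv X (.imp (.nav A B hA hB) (.nav (A ∪ C) (B ∪ C) hA.inl hB.inl))
  | trans {A B C : Set V} (hA : A.Nonempty) (hB : B.Nonempty) (hC : C.Nonempty) :
      ArmDeriv X (.imp (.nav A B hA hB) (.imp (.nav B C hB hC) (.nav A C hA hC)))
  | mp {φ ψ : Formula V} : ArmDeriv X (.imp φ ψ) → ArmDeriv X φ → ArmDeriv X ψ

/-- Derivability in the memoryless proof system: propositional tautologies,
Reflexivity, Augmentation, Monotonicity, and Modus Ponens. -/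
inductive MemDeriv (X : Set (Formula V)) : Formula V → Prop
  | hyp {φ : Formula V} : φ ∈ X → MemDeriv X φ
  | taut {φ : Formula V} : φ.Tautology → MemDeriv X φ
  | refl {A B : Set V} (hA : A.Nonempty) (hB : B.Nonempty) :
      A ⊆ B → MemDeriv X (.nav A B hA hB)
  | aug {A B C : Set V} (hA : A.Nonempty) (hB : B.Nonempty) (hC : C.Nonempty) :
      MemDeriv X (.imp (.nav A B hA hB) (.nav (A ∪ C) (B ∪ C) hA.inl hB.inl))
  | mono {A A' B : Set V} (hA : A.Nonempty) (hA' : A'.Nonempty) (hB : B.Nonempty) :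
      A ⊆ A' → MemDeriv X (.imp (.nav A' B hA' hB) (.nav A B hA hB))
  | mp {φ ψ : Formula V} : MemDeriv X (.imp φ ψ) → MemDeriv X φ → MemDeriv X ψ

/-- Satisfaction `T ⊨ φ` under the recall semantics (Definition 10):
`T ⊨ A ▷ B` iff `Path_s(A) ⊆ Visit_s(B)` for some recall strategy `s`. -/
def Sat (T : TransitionSystem V) : Formula V → Prop
  | .nav A B _ _ => ∃ s : RecallStrategy T, PathSet s A ⊆ VisitSet s B
  | .neg φ => ¬ Sat T φ
  | .imp φ ψ => Sat T φ → Sat T ψ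

/-- Satisfaction `T ⊨ φ` under the memoryless semantics (Definition 18). -/
def SatM (T : TransitionSystem V) : Formula V → Prop
  | .nav A B _ _ => ∃ s : Quotient T.sim → T.I, PathSetM s A ⊆ VisitSetM s B
  | .neg φ => ¬ SatM T φ
  | .imp φ ψ => SatM T φ → SatM T ψ

/-- `X` is consistent: no formula is derivable together with its negation. -/
def Consistent (X : Set (Formula V)) : Prop :=
  ¬ ∃ φ : Formula V, ArmDeriv X φ ∧ ArmDeriv X (.neg φ)

/-- `X` is a maximal consistent set of formulae. -/
def MaxConsistent (X : Set (Formula V)) : Prop :=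
  Consistent X ∧ ∀ φ : Formula V, φ ∈ X ∨ Formula.neg φ ∈ X

/-- The instruction set `I = {(A,B) | A ▷ B ∈ X}` of the canonical transition
system (Definition 21). -/
def CanonI (X : Set (Formula V)) : Type :=
  {p : Set V × Set V // ∃ (hA : p.1.Nonempty) (hB : p.2.Nonempty), Formula.nav p.1 p.2 hA hB ∈ X}

/-- Transitions of the canonical system (Definition 22): `Δ_{(A,B)}(w) = B` if
`w ∈ A` and `{⟲}` otherwise; the black hole `⟲` is `Sum.inr ()`. -/
def CanonΔ (X : Set (Formula V)) (i : CanonI X) : V ⊕ Unit → Set (V ⊕ Unit)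
  | .inl v => if v ∈ i.val.1 then Sum.inl '' i.val.2 else {Sum.inr ()}
  | .inr _ => {Sum.inr ()}

/-- The canonical transition system `T(X)` for the recall case: states
`V ∪ {⟲}`, indistinguishability is equality, `v* = {v}`. -/
def CanonT (X : Set (Formula V)) (_hX : MaxConsistent X) (_hV : Nonempty V) :
    TransitionSystem V where
  S := V ⊕ Unit
  sim := ⟨Eq, eq_equivalence⟩
  star := fun v => Quotient.mk _ (Sum.inl v)
  I := CanonI X
  instNonempty := by
    obtain ⟨v⟩ := _hV
    have hv : ({v} : Set V).Nonempty := Set.singleton_nonempty v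
    have hder : ArmDeriv X (Formula.nav {v} {v} hv hv) := ArmDeriv.refl hv hv subset_rfl
    rcases _hX.2 (Formula.nav {v} {v} hv hv) with hmem | hneg
    · exact ⟨⟨({v}, {v}), hv, hv, hmem⟩⟩
    · exact absurd ⟨_, hder, ArmDeriv.hyp hneg⟩ _hX.1
  Δ := CanonΔ X
  Δ_nonempty := by
    rintro ⟨⟨A, B⟩, hA, hB, -⟩ w
    cases w with
    | inl v =>
      by_cases hv : v ∈ A
      · simpa [CanonΔ, hv] using hB.image (Sum.inl : V → V ⊕ Unit)
      · simp [CanonΔ, hv]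
    | inr u => simp [CanonΔ]

/-- The chain `G^s_0 ⊆ G^s_1 ⊆ …` of Definition 23: `G^s_0 = G` and
`G^s_{n+1} = G^s_n ∪ { hd(h) | h a history with Δ_{s⟦h⟧}(hd(h)) ⊆ G^s_n }`. -/
def Gset (X : Set (Formula V)) (hX : MaxConsistent X) (hV : Nonempty V)
    (s : RecallStrategy (CanonT X hX hV)) (G : Set V) : ℕ → Set (V ⊕ Unit)
  | 0 => Sum.inl '' G
  | n + 1 =>
      Gset X hX hV s G n ∪
        {v | ∃ h : History (CanonT X hX hV),
              h.hd = v ∧ (CanonT X hX hV).Δ (s.act h) h.hd ⊆ Gset X hX hV s G n}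

/-! Let `N` be the first time a path `π` under `s₁ ∘_B s₂` visits `B*`; then `π|_B` is the suffix
of `π` from `N`. Every prefix of `π` of length `N + k` already contains `w_N`, so the composed
strategy plays `s₂` on its truncation, and that truncation is the `k`-th prefix of the suffix. -/

namespace TransitionSystem

variable {T : TransitionSystem V}

def Path.drop (π : Path T) (N : ℕ) : Path T :=
  ⟨fun k => π.w (N + k), fun k => π.i (N + k)⟩

theorem Path.Valid.drop {π : Path T} (hv : π.Valid) (N : ℕ) : (π.drop N).Valid := fun k => by
  simpa only [Path.drop, Nat.add_assoc] using hv (N + k)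

theorem Path.trunc_eq_drop {π : Path T} {B : Set V} (H : ∃ k, T.cls (π.w k) ∈ T.starSet B) :
    π.trunc B = π.drop (Nat.find H) := by
  simp only [Path.trunc, dif_pos H, Path.drop]

theorem History.truncIdx_eq {h : History T} {B : Set V} {N : ℕ} (hN : N ≤ h.n)
    (hB : T.cls (h.w N) ∈ T.starSet B) (hmin : ∀ j < N, T.cls (h.w j) ∉ T.starSet B) :
    h.truncIdx B = N := by
  refine le_antisymm (Nat.find_le (Or.inr hB)) (not_lt.1 fun hlt => ?_)
  rcases Nat.find_spec (p := fun k => k = h.n ∨ T.cls (h.w k) ∈ T.starSet B) ⟨h.n, Or.inl rfl⟩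
    with hn | hb
  · have hn : h.truncIdx B = h.n := hn
    omega
  · exact hmin _ hlt hb

theorem RecallStrategy.compB_act_of_visit (s1 s2 : RecallStrategy T) {B : Set V} {h : History T}
    (hvisit : ∃ j ≤ h.n, T.cls (h.w j) ∈ T.starSet B) :
    (s1.compB s2 B).act h = s2.act (h.trunc B) := by
  obtain ⟨j, hj, hb⟩ := hvisit
  exact if_neg fun hall => hall j hj hb

theorem Path.prefixH_trunc_indist {π : Path T} (hv : π.Valid) {B : Set V} {N : ℕ}
    (hB : T.cls (π.w N) ∈ T.starSet B) (hmin : ∀ j < N, T.cls (π.w j) ∉ T.starSet B) (k : ℕ) :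
    ((π.prefixH hv (N + k)).trunc B).Indist ((π.drop N).prefixH (hv.drop N) k) := by
  have hidx : (π.prefixH hv (N + k)).truncIdx B = N :=
    History.truncIdx_eq (Nat.le_add_right N k) hB hmin
  refine ⟨?_, fun j _ => ?_, fun j _ => ?_⟩
  · show N + k - _ = k
    omega
  · show π.i (_ + j) = π.i (N + j)
    rw [hidx]
  · show T.sim.r (π.w (_ + j)) (π.w (N + j))
    rw [hidx]

theorem IsPathUnder.drop_of_first_visit {s1 s2 : RecallStrategy T} {B : Set V} {π : Path T}
    (hπ : IsPathUnder (s1.compB s2 B) π) {N : ℕ} (hB : T.cls (π.w N) ∈ T.starSet B)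
    (hmin : ∀ j < N, T.cls (π.w j) ∉ T.starSet B) :
    IsPathUnder s2 (π.drop N) := by
  obtain ⟨hv, hact⟩ := hπ
  refine ⟨hv.drop N, fun k => ?_⟩
  calc (π.drop N).i k = (s1.compB s2 B).act (π.prefixH hv (N + k)) := hact (N + k)
    _ = s2.act ((π.prefixH hv (N + k)).trunc B) :=
      s1.compB_act_of_visit s2 ⟨N, Nat.le_add_right N k, hB⟩
    _ = s2.act ((π.drop N).prefixH (hv.drop N) k) :=
      s2.respects _ _ (Path.prefixH_trunc_indist hv hB hmin k)

end TransitionSystem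

theorem comp_trunc_subset_general (T : TransitionSystem V)
    (s1 s2 : RecallStrategy T) (A B : Set V)
    (h : PathSet (s1.compB s2 B) A ⊆ VisitSet (s1.compB s2 B) B) :
    (fun π : Path T => π.trunc B) '' PathSet (s1.compB s2 B) A ⊆ PathSet s2 B := by
  rintro _ ⟨π, hπA, rfl⟩
  obtain ⟨hπ, hvisit⟩ := h hπA
  show π.trunc B ∈ _
  rw [Path.trunc_eq_drop hvisit]
  exact ⟨hπ.drop_of_first_visit (Nat.find_spec hvisit) (fun j hj => Nat.find_min hvisit hj),
    by simpa only [Path.drop, add_zero] using Nat.find_spec hvisit⟩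

/-- If `Path_{s1∘_B s2}(A) ⊆ Visit(B)` then
`(Path_{s1∘_B s2}(A))|_B ⊆ Path_{s2}(B)`. -/
theorem comp_trunc_subset [Fintype V] (T : TransitionSystem V)
    (s1 s2 : RecallStrategy T) (A B : Set V)
    (h : PathSet (s1.compB s2 B) A ⊆ VisitSet (s1.compB s2 B) B) :
    (fun π : Path T => π.trunc B) '' PathSet (s1.compB s2 B) A ⊆ PathSet s2 B :=
  comp_trunc_subset_general T s1 s2 A B h

end
end Nav
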